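/- Let X be a complex manifold, D a hypersurface with defining holomorphic function s, and let σ be a holomorphic function on a neighborhood of a point q ∈ D. Suppose there is a sequence of points q_j → q with q_j ∉ D, lying on a smooth real path through q transversal to D, such that for every δ > 0 there exists C_δ > 0 with |s(q_j)|^{2δ} ≤ C_δ·|σ(q_j)|² for all j. Then σ(q) ≠ 0. -/

import Mathlib

/-!
Take `δ = 1/2` in the domination hypothesis. If `σ(q) = 0`, then `‖σ x‖ ≤ K‖x - q‖` near `q`,
so along the sequence, with `d = dist (qj j) q`,
`c d ≤ ‖s (qj j)‖ ≤ C ‖σ (qj j)‖² ≤ C K² d²`, which is impossible as `d → 0`.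
Here `d > 0` because the domination forces `σ (qj j) ≠ 0`.
-/

open Filter Topology

theorem DifferentiableAt.exists_eventually_norm_le_mul_norm_sub {𝕜 E F : Type*}
    [NontriviallyNormedField 𝕜] [NormedAddCommGroup E] [NormedSpace 𝕜 E]
    [NormedAddCommGroup F] [NormedSpace 𝕜 F] {f : E → F} {q : E}
    (hf : DifferentiableAt 𝕜 f q) (hq : f q = 0) :
    ∃ K, ∀ᶠ x in 𝓝 q, ‖f x‖ ≤ K * ‖x - q‖ := by
  obtain ⟨K, hK⟩ := hf.hasFDerivAt.isBigO_sub.bound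
  exact ⟨K, hK.mono fun x hx => by simpa [hq] using hx⟩

theorem not_eventually_mul_le_mul_sq {ι : Type*} {l : Filter ι} [l.NeBot] {d : ι → ℝ}
    (hd : Tendsto d l (𝓝 0)) (hpos : ∀ j, 0 < d j) {c : ℝ} (hc : 0 < c) (M : ℝ) :
    ¬ ∀ᶠ j in l, c * d j ≤ M * d j ^ 2 := by
  intro h
  have hle : ∀ᶠ j in l, c ≤ M * d j := h.mono fun j hj => by
    have := hpos j
    nlinarith
  have hlim : Tendsto (fun j => M * d j) l (𝓝 0) := by simpa using hd.const_mul M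
  exact hc.not_ge (ge_of_tendsto hlim hle)

theorem stmt_5_general {n : ℕ} (s σ : EuclideanSpace ℂ (Fin n) → ℂ)
    (q : EuclideanSpace ℂ (Fin n))
    (hσ : AnalyticAt ℂ σ q)
    (qj : ℕ → EuclideanSpace ℂ (Fin n))
    (htend : Tendsto qj atTop (nhds q))
    (hnotD : ∀ j, s (qj j) ≠ 0)
    (c : ℝ) (hc : 0 < c)
    (htrans : ∀ j, c * dist (qj j) q ≤ ‖s (qj j)‖)
    (hdom : ∀ δ > (0:ℝ), ∃ Cδ > (0:ℝ), ∀ j,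
      ‖s (qj j)‖ ^ (2 * δ) ≤ Cδ * ‖σ (qj j)‖ ^ 2) :
    σ q ≠ 0 := by
  intro hσq
  obtain ⟨C, hC_pos, hC⟩ := hdom (1 / 2) (by norm_num)
  have hs_le : ∀ j, ‖s (qj j)‖ ≤ C * ‖σ (qj j)‖ ^ 2 := fun j => by
    simpa using hC j
  have hσ_ne : ∀ j, σ (qj j) ≠ 0 := fun j hj => by
    have := hs_le j
    simp only [hj, norm_zero] at this
    exact hnotD j (norm_le_zero_iff.1 (by linarith))
  have hpos : ∀ j, 0 < dist (qj j) q := fun j => dist_pos.2 fun h => hσ_ne j (h ▸ hσq)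
  obtain ⟨K, hK⟩ := hσ.differentiableAt.exists_eventually_norm_le_mul_norm_sub hσq
  refine not_eventually_mul_le_mul_sq (tendsto_iff_dist_tendsto_zero.1 htend) hpos hc
    (C * K ^ 2) ?_
  filter_upwards [htend.eventually hK] with j hj
  calc c * dist (qj j) q ≤ ‖s (qj j)‖ := htrans j
    _ ≤ C * ‖σ (qj j)‖ ^ 2 := hs_le j
    _ ≤ C * (K * dist (qj j) q) ^ 2 := by rw [dist_eq_norm]; gcongr
    _ = C * K ^ 2 * dist (qj j) q ^ 2 := by ring

theorem stmt_5 {n : ℕ} (s σ : EuclideanSpace ℂ (Fin n) → ℂ)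
    (q : EuclideanSpace ℂ (Fin n))
    (hs : AnalyticAt ℂ s q) (hσ : AnalyticAt ℂ σ q)
    (qj : ℕ → EuclideanSpace ℂ (Fin n))
    (htend : Tendsto qj atTop (nhds q))
    (hsq : s q = 0) (hnotD : ∀ j, s (qj j) ≠ 0)
    (c : ℝ) (hc : 0 < c)
    (htrans : ∀ j, c * dist (qj j) q ≤ ‖s (qj j)‖)
    (hdom : ∀ δ > (0:ℝ), ∃ Cδ > (0:ℝ), ∀ j,
      ‖s (qj j)‖ ^ (2 * δ) ≤ Cδ * ‖σ (qj j)‖ ^ 2) :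
    σ q ≠ 0 :=
  stmt_5_general s σ q hσ qj htend hnotD c hc htrans hdom
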